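/- Let A be a commutative unital complex Banach algebra and α(x) a monic polynomial over A. Then the Arens-Hoffman extension B = A[x]/(α(x)) with an Arens-Hoffman norm is complete, i.e., B is a Banach algebra. -/

import Mathlib

open Polynomial

/-- The Arens–Hoffman weighted norm on `A[x]`:
`‖Σ_{k=0}^p c_k x^k‖ := Σ_{k=0}^p ‖c_k‖ t^k`. -/
noncomputable def ahNorm {A : Type*} [NormedCommRing A] (t : ℝ) (p : Polynomial A) : ℝ :=
  ∑ k ∈ Finset.range (p.natDegree + 1), ‖p.coeff k‖ * t ^ k

/-- The quotient seminorm on `A[x]⧸I` induced by the weighted norm: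
the infimum of the weighted norms over all representatives of the coset. -/
noncomputable def ahQuotNorm {A : Type*} [NormedCommRing A] (t : ℝ)
    (I : Ideal (Polynomial A)) (b : Polynomial A ⧸ I) : ℝ :=
  sInf (ahNorm t '' {p : Polynomial A | Ideal.Quotient.mk I p = b})

section Aux

variable {A : Type*} [NormedCommRing A]

lemma ahNorm_eq_sum (t : ℝ) (p : Polynomial A) {N : ℕ} (hN : p.natDegree < N) :
    ahNorm t p = ∑ k ∈ Finset.range N, ‖p.coeff k‖ * t ^ k := by
  unfold ahNorm
  refine Finset.sum_subset (Finset.range_subset_range.2 hN) ?_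
  intro k _ hk
  rw [Finset.mem_range, not_lt] at hk
  rw [Polynomial.coeff_eq_zero_of_natDegree_lt (Nat.lt_of_succ_le hk), norm_zero, zero_mul]

lemma ahNorm_nonneg {t : ℝ} (ht : 0 ≤ t) (p : Polynomial A) : 0 ≤ ahNorm t p := by
  refine Finset.sum_nonneg fun k _ => ?_
  positivity

lemma coeff_mul_pow_le_ahNorm {t : ℝ} (ht : 0 ≤ t) (p : Polynomial A) (j : ℕ) :
    ‖p.coeff j‖ * t ^ j ≤ ahNorm t p := by
  rcases le_or_gt j p.natDegree with h | h
  · unfold ahNorm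
    refine Finset.single_le_sum (f := fun k => ‖p.coeff k‖ * t ^ k) (fun k _ => by positivity) ?_
    exact Finset.mem_range.2 (Nat.lt_succ_of_le h)
  · rw [Polynomial.coeff_eq_zero_of_natDegree_lt h, norm_zero, zero_mul]
    exact ahNorm_nonneg ht p

lemma natDegree_lt_of_coeff_eq_zero (p : Polynomial A) {N : ℕ} (hN : 0 < N)
    (h : ∀ j, N ≤ j → p.coeff j = 0) : p.natDegree < N := by
  rcases eq_or_ne p 0 with rfl | hp
  · simpa using hN
  · by_contra hc
    push_neg at hc
    exact hp (Polynomial.leadingCoeff_eq_zero.mp (h _ hc))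

lemma ahNorm_modByMonic_le [NormOneClass A] (α : Polynomial A) (hα : α.Monic)
    (hdeg : 0 < α.natDegree) {t : ℝ} (ht : 0 < t)
    (hparam : ∑ k ∈ Finset.range α.natDegree, ‖α.coeff k‖ * t ^ k ≤ t ^ α.natDegree)
    (q : Polynomial A) : ahNorm t (q %ₘ α) ≤ ahNorm t q := by
  haveI : Nontrivial A := nontrivial_of_ne 1 0 (by
    intro h
    have h1 : ‖(1 : A)‖ = 1 := norm_one
    rw [h, norm_zero] at h1
    exact zero_ne_one h1)
  set n := α.natDegree with hn
  generalize hq : q.natDegree = d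
  induction d using Nat.strong_induction_on generalizing q with
  | _ d ih =>
  rcases lt_or_ge d n with hdn | hnd
  · -- degree q < degree α, so q %ₘ α = q
    have hql : q.degree < α.degree := by
      calc q.degree ≤ (q.natDegree : WithBot ℕ) := Polynomial.degree_le_natDegree
        _ < (n : WithBot ℕ) := by exact_mod_cast (hq ▸ hdn)
        _ = α.degree := (Polynomial.degree_eq_natDegree hα.ne_zero).symm
    rw [(Polynomial.modByMonic_eq_self_iff hα).2 hql]
  · -- reduction step
    set m := d - n with hm
    have hd : d = m + n := by omega
    set c := q.coeff d with hc
    set w : Polynomial A := α * Polynomial.C c * Polynomial.X ^ m with hw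
    set q' := q - w with hq'
    have hwcoeff : ∀ j, w.coeff j =
        if m ≤ j then α.coeff (j - m) * c else 0 := by
      intro j
      rw [hw, Polynomial.coeff_mul_X_pow']
      simp [Polynomial.coeff_mul_C]
    have hmod : q' %ₘ α = q %ₘ α := by
      refine Polynomial.modByMonic_eq_of_dvd_sub hα ?_
      have : q' - q = -(α * (Polynomial.C c * Polynomial.X ^ m)) := by
        rw [hq', hw]; ring
      rw [this]
      exact (dvd_mul_right α _).neg_right
    have hq'd : ∀ j, d ≤ j → q'.coeff j = 0 := by
      intro j hj
      rcases eq_or_lt_of_le hj with h | hj'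
      · subst h
        have hwj : w.coeff d = c := by
          rw [hwcoeff, if_pos (by omega)]
          have hnn : d - m = n := by omega
          rw [hnn, hn, hα.coeff_natDegree, one_mul]
        simp [hq', Polynomial.coeff_sub, hwj, ← hc]
      · have h1 : q.coeff j = 0 := Polynomial.coeff_eq_zero_of_natDegree_lt (hq ▸ hj')
        have h2 : w.coeff j = 0 := by
          rw [hwcoeff, if_pos (by omega)]
          have : α.coeff (j - m) = 0 :=
            Polynomial.coeff_eq_zero_of_natDegree_lt (by omega)
          rw [this, zero_mul]
        simp [hq', Polynomial.coeff_sub, h1, h2]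
    have hq'deg : q'.natDegree < d :=
      natDegree_lt_of_coeff_eq_zero q' (by omega) hq'd
    have step1 : ahNorm t (q %ₘ α) ≤ ahNorm t q' := by
      rw [← hmod]
      exact ih q'.natDegree (by omega) q' rfl
    refine step1.trans ?_
    -- now show ahNorm t q' ≤ ahNorm t q
    have e1 : ahNorm t q' = ∑ j ∈ Finset.range d, ‖q'.coeff j‖ * t ^ j :=
      ahNorm_eq_sum t q' hq'deg
    have e2 : ahNorm t q = ∑ j ∈ Finset.range (d + 1), ‖q.coeff j‖ * t ^ j := by
      rw [ahNorm, hq]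
    have tri : ∀ j, ‖q'.coeff j‖ * t ^ j ≤ ‖q.coeff j‖ * t ^ j + ‖w.coeff j‖ * t ^ j := by
      intro j
      have : ‖q'.coeff j‖ ≤ ‖q.coeff j‖ + ‖w.coeff j‖ := by
        rw [hq', Polynomial.coeff_sub]
        exact norm_sub_le _ _
      nlinarith [pow_pos ht j, norm_nonneg (q.coeff j), norm_nonneg (w.coeff j)]
    have hwsum : ∑ j ∈ Finset.range d, ‖w.coeff j‖ * t ^ j ≤ ‖c‖ * t ^ d := by
      have hsplit : ∑ j ∈ Finset.range d, ‖w.coeff j‖ * t ^ j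
          = ∑ j ∈ Finset.range m, ‖w.coeff j‖ * t ^ j
            + ∑ k ∈ Finset.range n, ‖w.coeff (m + k)‖ * t ^ (m + k) := by
        rw [hd]; exact Finset.sum_range_add _ m n
      have hzero : ∑ j ∈ Finset.range m, ‖w.coeff j‖ * t ^ j = 0 := by
        refine Finset.sum_eq_zero fun j hj => ?_
        rw [Finset.mem_range] at hj
        rw [hwcoeff, if_neg (by omega), norm_zero, zero_mul]
      have hmain : ∑ k ∈ Finset.range n, ‖w.coeff (m + k)‖ * t ^ (m + k)
          ≤ ‖c‖ * t ^ d := by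
        have : ∀ k ∈ Finset.range n, ‖w.coeff (m + k)‖ * t ^ (m + k)
            ≤ (‖α.coeff k‖ * t ^ k) * (‖c‖ * t ^ m) := by
          intro k _
          rw [hwcoeff, if_pos (Nat.le_add_right m k)]
          have h1 : m + k - m = k := by omega
          rw [h1, pow_add]
          calc ‖α.coeff k * c‖ * (t ^ m * t ^ k)
              ≤ (‖α.coeff k‖ * ‖c‖) * (t ^ m * t ^ k) :=
                mul_le_mul_of_nonneg_right (norm_mul_le _ _) (by positivity)
            _ = (‖α.coeff k‖ * t ^ k) * (‖c‖ * t ^ m) := by ring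
        calc ∑ k ∈ Finset.range n, ‖w.coeff (m + k)‖ * t ^ (m + k)
            ≤ ∑ k ∈ Finset.range n, (‖α.coeff k‖ * t ^ k) * (‖c‖ * t ^ m) :=
              Finset.sum_le_sum this
          _ = (∑ k ∈ Finset.range n, ‖α.coeff k‖ * t ^ k) * (‖c‖ * t ^ m) := by
              rw [← Finset.sum_mul]
          _ ≤ t ^ n * (‖c‖ * t ^ m) := by
              have h0 : (0:ℝ) ≤ ‖c‖ * t ^ m := by positivity
              exact mul_le_mul_of_nonneg_right hparam h0
          _ = ‖c‖ * t ^ d := by rw [hd, pow_add]; ring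
      rw [hsplit, hzero, zero_add]
      exact hmain
    calc ahNorm t q' = ∑ j ∈ Finset.range d, ‖q'.coeff j‖ * t ^ j := e1
      _ ≤ ∑ j ∈ Finset.range d, (‖q.coeff j‖ * t ^ j + ‖w.coeff j‖ * t ^ j) :=
          Finset.sum_le_sum fun j _ => tri j
      _ = ∑ j ∈ Finset.range d, ‖q.coeff j‖ * t ^ j
            + ∑ j ∈ Finset.range d, ‖w.coeff j‖ * t ^ j := Finset.sum_add_distrib
      _ ≤ ∑ j ∈ Finset.range d, ‖q.coeff j‖ * t ^ j + ‖c‖ * t ^ d := by linarith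
      _ = ∑ j ∈ Finset.range (d + 1), ‖q.coeff j‖ * t ^ j := by
          rw [Finset.sum_range_succ, ← hc]
      _ = ahNorm t q := e2.symm

lemma ahQuotNorm_le_ahNorm {t : ℝ} (ht : 0 ≤ t) (I : Ideal (Polynomial A))
    (p : Polynomial A) : ahQuotNorm t I (Ideal.Quotient.mk I p) ≤ ahNorm t p := by
  refine csInf_le ⟨0, ?_⟩ ⟨p, rfl, rfl⟩
  rintro x ⟨q, -, rfl⟩
  exact ahNorm_nonneg ht q

lemma ahNorm_modByMonic_le_ahQuotNorm [NormOneClass A] (α : Polynomial A) (hα : α.Monic)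
    (hdeg : 0 < α.natDegree) {t : ℝ} (ht : 0 < t)
    (hparam : ∑ k ∈ Finset.range α.natDegree, ‖α.coeff k‖ * t ^ k ≤ t ^ α.natDegree)
    (p : Polynomial A) :
    ahNorm t (p %ₘ α) ≤ ahQuotNorm t (Ideal.span {α}) (Ideal.Quotient.mk _ p) := by
  refine le_csInf ⟨_, ⟨p, rfl, rfl⟩⟩ ?_
  rintro x ⟨q, hq, rfl⟩
  have hmem : q - p ∈ Ideal.span {α} := (Ideal.Quotient.eq).1 hq
  have hdvd : α ∣ q - p := (Ideal.mem_span_singleton).1 hmem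
  have : q %ₘ α = p %ₘ α := Polynomial.modByMonic_eq_of_dvd_sub hα hdvd
  rw [← this]
  exact ahNorm_modByMonic_le α hα hdeg ht hparam q

end Aux

/-- Let `A` be a commutative unital complex **Banach** algebra and `α(x)` a monic polynomial
over `A`.  Then the Arens–Hoffman extension `B = A[x]/(α(x))` with an Arens–Hoffman norm is
complete, i.e. `B` is a Banach algebra: every Cauchy sequence in `B` (with respect to the
quotient norm) converges. -/
theorem ahQuot_complete {A : Type*} [NormedCommRing A] [NormedAlgebra ℂ A]
    [NormOneClass A] [CompleteSpace A]
    (α : Polynomial A) (hα : α.Monic) (hdeg : 0 < α.natDegree)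
    (t : ℝ) (ht : 0 < t)
    (hparam : ∑ k ∈ Finset.range α.natDegree, ‖α.coeff k‖ * t ^ k ≤ t ^ α.natDegree)
    (b : ℕ → Polynomial A ⧸ Ideal.span {α})
    (hb : ∀ ε > (0 : ℝ), ∃ N : ℕ, ∀ m ≥ N, ∀ k ≥ N,
      ahQuotNorm t (Ideal.span {α}) (b m - b k) < ε) :
    ∃ L : Polynomial A ⧸ Ideal.span {α}, ∀ ε > (0 : ℝ), ∃ N : ℕ, ∀ m ≥ N,
      ahQuotNorm t (Ideal.span {α}) (b m - L) < ε := by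
  classical
  haveI : Nontrivial A := nontrivial_of_ne 1 0 (by
    intro h
    have h1 : ‖(1 : A)‖ = 1 := norm_one
    rw [h, norm_zero] at h1
    exact zero_ne_one h1)
  set n := α.natDegree with hn
  -- choose representatives
  choose p hp using fun m => Ideal.Quotient.mk_surjective (I := Ideal.span {α}) (b m)
  set r : ℕ → Polynomial A := fun m => p m %ₘ α with hr
  have hrmk : ∀ m, Ideal.Quotient.mk (Ideal.span {α}) (r m) = b m := by
    intro m
    rw [← hp m]
    refine (Ideal.Quotient.eq).2 (Ideal.mem_span_singleton.2 ?_)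
    have hre : r m - p m = -(α * (p m /ₘ α)) := by
      rw [hr]
      simp only
      rw [Polynomial.modByMonic_eq_sub_mul_div _ α]
      ring
    rw [hre]
    exact (dvd_mul_right α _).neg_right
  have hrdeg : ∀ m, (r m).natDegree < n := by
    intro m
    have hd := Polynomial.degree_modByMonic_lt (p m) hα
    rcases eq_or_ne (r m) 0 with h0 | h0
    · rw [h0]; simpa using hdeg
    · have := Polynomial.natDegree_lt_natDegree h0 (by
        rw [Polynomial.degree_eq_natDegree hα.ne_zero] at hd ⊢; exact hd)
      exact this
  -- difference of representatives has small degree, is its own remainder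
  have hsubdeg : ∀ m k, (r m - r k).natDegree < n := fun m k =>
    lt_of_le_of_lt (Polynomial.natDegree_sub_le _ _) (max_lt (hrdeg m) (hrdeg k))
  have hself : ∀ (q : Polynomial A), q.natDegree < n → q %ₘ α = q := by
    intro q hq
    refine (Polynomial.modByMonic_eq_self_iff hα).2 ?_
    calc q.degree ≤ (q.natDegree : WithBot ℕ) := Polynomial.degree_le_natDegree
      _ < (n : WithBot ℕ) := by exact_mod_cast hq
      _ = α.degree := (Polynomial.degree_eq_natDegree hα.ne_zero).symm
  have key : ∀ m k, ahNorm t (r m - r k) ≤ ahQuotNorm t (Ideal.span {α}) (b m - b k) := by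
    intro m k
    have hmk : Ideal.Quotient.mk (Ideal.span {α}) (r m - r k) = b m - b k := by
      rw [map_sub, hrmk, hrmk]
    calc ahNorm t (r m - r k) = ahNorm t ((r m - r k) %ₘ α) := by
          rw [hself _ (hsubdeg m k)]
      _ ≤ ahQuotNorm t (Ideal.span {α}) (Ideal.Quotient.mk _ (r m - r k)) :=
          ahNorm_modByMonic_le_ahQuotNorm α hα hdeg ht hparam _
      _ = ahQuotNorm t (Ideal.span {α}) (b m - b k) := by rw [hmk]
  -- coefficientwise Cauchy
  have hcoeff : ∀ j : ℕ, ∃ cj : A,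
      Filter.Tendsto (fun m => (r m).coeff j) Filter.atTop (nhds cj) := by
    intro j
    have hcau : CauchySeq (fun m => (r m).coeff j) := by
      rw [Metric.cauchySeq_iff]
      intro ε hε
      obtain ⟨N, hN⟩ := hb (ε * t ^ j) (by positivity)
      refine ⟨N, fun m hm k hk => ?_⟩
      rw [dist_eq_norm]
      have h1 : ‖(r m).coeff j - (r k).coeff j‖ * t ^ j ≤ ahNorm t (r m - r k) := by
        have := coeff_mul_pow_le_ahNorm ht.le (r m - r k) j
        rwa [Polynomial.coeff_sub] at this
      have h2 := (h1.trans (key m k)).trans_lt (hN m hm k hk)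
      have htj : (0:ℝ) < t ^ j := pow_pos ht j
      exact lt_of_mul_lt_mul_right (by linarith) htj.le
    exact cauchySeq_tendsto_of_complete hcau
  choose c hc using hcoeff
  -- limit polynomial
  set s : Polynomial A := ∑ j ∈ Finset.range n, Polynomial.C (c j) * Polynomial.X ^ j
    with hs
  have hscoeff : ∀ j, s.coeff j = if j < n then c j else 0 := by
    intro j
    rw [hs, Polynomial.finset_sum_coeff]
    simp only [Polynomial.coeff_C_mul, Polynomial.coeff_X_pow]
    by_cases hj : j < n
    · rw [if_pos hj, Finset.sum_eq_single j]
      · simp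
      · intro i _ hij; simp [if_neg (Ne.symm hij)]
      · intro hjj; exact absurd (Finset.mem_range.2 hj) hjj
    · rw [if_neg hj]
      refine Finset.sum_eq_zero fun i hi => ?_
      rw [Finset.mem_range] at hi
      have : ¬ (j = i) := by omega
      simp [this]
  have hsdeg : s.natDegree < n := by
    refine natDegree_lt_of_coeff_eq_zero s hdeg fun j hj => ?_
    rw [hscoeff, if_neg (by omega)]
  refine ⟨Ideal.Quotient.mk _ s, ?_⟩
  intro ε hε
  obtain ⟨N, hN⟩ := hb (ε / 2) (by linarith)
  refine ⟨N, fun m hm => ?_⟩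
  have hdiffdeg : (r m - s).natDegree < n :=
    lt_of_le_of_lt (Polynomial.natDegree_sub_le _ _) (max_lt (hrdeg m) hsdeg)
  have hquot : ahQuotNorm t (Ideal.span {α}) (b m - Ideal.Quotient.mk _ s)
      ≤ ahNorm t (r m - s) := by
    have hmk : Ideal.Quotient.mk (Ideal.span {α}) (r m - s)
        = b m - Ideal.Quotient.mk _ s := by rw [map_sub, hrmk]
    rw [← hmk]
    exact ahQuotNorm_le_ahNorm ht.le _ _
  have hbound : ahNorm t (r m - s) ≤ ε / 2 := by
    have heq : ahNorm t (r m - s)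
        = ∑ j ∈ Finset.range n, ‖(r m).coeff j - c j‖ * t ^ j := by
      rw [ahNorm_eq_sum t _ hdiffdeg]
      refine Finset.sum_congr rfl fun j hj => ?_
      rw [Finset.mem_range] at hj
      rw [Polynomial.coeff_sub, hscoeff, if_pos hj]
    rw [heq]
    -- take limit in k of the Cauchy bound
    have htend : Filter.Tendsto
        (fun k => ∑ j ∈ Finset.range n, ‖(r m).coeff j - (r k).coeff j‖ * t ^ j)
        Filter.atTop (nhds (∑ j ∈ Finset.range n, ‖(r m).coeff j - c j‖ * t ^ j)) := by
      refine tendsto_finset_sum _ fun j _ => ?_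
      exact (((tendsto_const_nhds.sub (hc j)).norm).mul tendsto_const_nhds)
    refine le_of_tendsto htend ?_
    filter_upwards [Filter.eventually_ge_atTop N] with k hk
    have hsum : ∑ j ∈ Finset.range n, ‖(r m).coeff j - (r k).coeff j‖ * t ^ j
        = ahNorm t (r m - r k) := by
      rw [ahNorm_eq_sum t _ (hsubdeg m k)]
      exact Finset.sum_congr rfl fun j _ => by rw [Polynomial.coeff_sub]
    rw [hsum]
    exact (key m k).trans (hN m hm k hk).le
  linarith [hquot.trans hbound]
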